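/- arXiv:2303.00847 — 3 statements merged into one kernel-verified Lean document; each statement's English description precedes it below -/
import Mathlib

section
/- Let Ω ⊂ ℝ^d be a bounded measurable set with finite positive Lebesgue measure and let β > 4. Let g : ℝ → ℝ be measurable and bounded (|g(t)| ≤ K₁ for all t), twice differentiable with |g''(t)| ≤ K₂ for all t. Then the Nemytskii operator N : L^β(Ω) → L²(Ω), N(u) = g∘u, is well defined and Fréchet differentiable at every y ∈ L^β(Ω): there exists a continuous linear map D : L^β(Ω) → L²(Ω) such that (D h)(x) = g'(y(x)) h(x) for a.e. x ∈ Ω and every h ∈ L^β(Ω), and N has Fréchet derivative D at y. -/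
/-!
The derivative is multiplication by `g' ∘ y`, a bounded function (`g'` is bounded because `g`
and `g''` are), hence a bounded operator `L^β → L²` on a finite measure space. Taylor's
formula bounds the remainder pointwise by `K₂ h²`, and `‖h²‖_{L²} = ‖h‖²_{L⁴} ≤ C ‖h‖²_{L^β}`
because `β ≥ 4`: the remainder is quadratic in `‖h‖`, so in particular `o(‖h‖)`.
-/

open MeasureTheory ENNReal
open scoped NNReal

theorem ENNReal.one_div_toReal_sub_nonneg {p q : ℝ≥0∞} (hq : q ≠ 0) (hqp : q ≤ p) :
    0 ≤ 1 / q.toReal - 1 / p.toReal := by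
  rcases eq_or_ne p ∞ with rfl | hp
  · simp
  have hq' : q ≠ ∞ := ne_top_of_le_ne_top hp hqp
  exact sub_nonneg.2 <| one_div_le_one_div_of_le (toReal_pos hq hq') (toReal_mono hp hqp)

section Calculus

variable {g g' g'' : ℝ → ℝ} {K₂ : ℝ}

theorem abs_sub_sub_deriv_mul_le_mul_sq (hg' : ∀ t, HasDerivAt g (g' t) t)
    (hg'' : ∀ t, HasDerivAt g' (g'' t) t) (hg''bd : ∀ t, |g'' t| ≤ K₂) (a b : ℝ) :
    |g a - g b - g' b * (a - b)| ≤ K₂ * (a - b) ^ 2 := by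
  have hK₂ : 0 ≤ K₂ := (abs_nonneg _).trans (hg''bd 0)
  have hg'_lip : ∀ x, |g' x - g' b| ≤ K₂ * |x - b| := fun x => by
    simpa only [Real.norm_eq_abs] using Convex.norm_image_sub_le_of_norm_hasDerivWithin_le
      (fun t _ => (hg'' t).hasDerivWithinAt) (fun t _ => hg''bd t) convex_univ
      (Set.mem_univ b) (Set.mem_univ x)
  have hderiv : ∀ x ∈ Set.uIcc b a, HasDerivWithinAt (fun s => g s - g' b * s) (g' x - g' b)
      (Set.uIcc b a) x := fun x _ =>
    ((hg' x).sub ((hasDerivAt_id x).const_mul (g' b) |>.congr_deriv (mul_one _))).hasDerivWithinAt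
  have hbound : ∀ x ∈ Set.uIcc b a, ‖g' x - g' b‖ ≤ K₂ * |a - b| := fun x hx =>
    (hg'_lip x).trans (mul_le_mul_of_nonneg_left (Set.abs_sub_left_of_mem_uIcc hx) hK₂)
  have := Convex.norm_image_sub_le_of_norm_hasDerivWithin_le hderiv hbound (convex_uIcc b a)
    Set.left_mem_uIcc Set.right_mem_uIcc
  calc |g a - g b - g' b * (a - b)| = ‖(g a - g' b * a) - (g b - g' b * b)‖ := by
        rw [Real.norm_eq_abs]; ring_nf
    _ ≤ K₂ * |a - b| * |a - b| := this
    _ = K₂ * (a - b) ^ 2 := by rw [mul_assoc, ← abs_mul, abs_mul_self, sq]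

theorem abs_deriv_le_of_abs_le_of_abs_deriv2_le {K₁ : ℝ} (hgbd : ∀ t, |g t| ≤ K₁)
    (hg' : ∀ t, HasDerivAt g (g' t) t) (hg'' : ∀ t, HasDerivAt g' (g'' t) t)
    (hg''bd : ∀ t, |g'' t| ≤ K₂) (t : ℝ) : |g' t| ≤ 2 * K₁ + K₂ := by
  have htaylor := abs_sub_sub_deriv_mul_le_mul_sq hg' hg'' hg''bd (t + 1) t
  simp only [add_sub_cancel_left, mul_one, one_pow] at htaylor
  calc |g' t| = |g (t + 1) - g t - (g (t + 1) - g t - g' t)| := by ring_nf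
    _ ≤ |g (t + 1)| + |g t| + |g (t + 1) - g t - g' t| := by
        linarith [abs_sub (g (t + 1) - g t) (g (t + 1) - g t - g' t), abs_sub (g (t + 1)) (g t)]
    _ ≤ 2 * K₁ + K₂ := by linarith [hgbd (t + 1), hgbd t]

end Calculus

namespace MeasureTheory.Lp

variable {α : Type*} [MeasurableSpace α] {μ : Measure α} [IsFiniteMeasure μ] {p q : ℝ≥0∞}

theorem norm_le_mul_norm_of_ae_abs_le_mul (hq : q ≠ 0) (hqp : q ≤ p) {C : ℝ} (hC : 0 ≤ C)
    {F : Lp ℝ q μ} {f : Lp ℝ p μ} (hF : ∀ᵐ x ∂μ, |F x| ≤ C * |f x|) :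
    ‖F‖ ≤ C * μ.real Set.univ ^ (1 / q.toReal - 1 / p.toReal) * ‖f‖ := by
  have hle : eLpNorm F q μ ≤
      ENNReal.ofReal C * (eLpNorm f p μ * μ Set.univ ^ (1 / q.toReal - 1 / p.toReal)) :=
    (eLpNorm_le_mul_eLpNorm_of_ae_le_mul hF q).trans <| by
      gcongr; exact eLpNorm_le_eLpNorm_mul_rpow_measure_univ hqp (Lp.aestronglyMeasurable f)
  have hfin : μ Set.univ ^ (1 / q.toReal - 1 / p.toReal) ≠ ∞ :=
    rpow_ne_top_of_nonneg (one_div_toReal_sub_nonneg hq hqp) (measure_ne_top μ _)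
  have := ENNReal.toReal_mono (by finiteness) hle
  rw [Lp.norm_def, Lp.norm_def]
  simpa [ENNReal.toReal_mul, ENNReal.toReal_rpow, hC, Measure.real, mul_comm, mul_assoc,
    mul_left_comm] using this

theorem norm_le_mul_norm_sq_of_ae_abs_le_mul_sq (hp : 4 ≤ p) {C : ℝ} (hC : 0 ≤ C)
    {F : Lp ℝ 2 μ} {f : Lp ℝ p μ} (hF : ∀ᵐ x ∂μ, |F x| ≤ C * f x ^ 2) :
    ‖F‖ ≤ C * (μ.real Set.univ ^ (1 / 4 - 1 / p.toReal)) ^ 2 * ‖f‖ ^ 2 := by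
  have hF' : ∀ᵐ x ∂μ, ‖F x‖ ≤ C * ‖‖f x‖ ^ (2 : ℝ)‖ := hF.mono fun x hx => by
    simpa [Real.norm_eq_abs, sq_abs] using hx
  have hsq : eLpNorm (fun x => ‖f x‖ ^ (2 : ℝ)) 2 μ = eLpNorm f 4 μ ^ (2 : ℝ) := by
    rw [eLpNorm_norm_rpow _ two_pos]; norm_num
  have hle : eLpNorm F 2 μ ≤
      ENNReal.ofReal C * (eLpNorm f p μ * μ Set.univ ^ (1 / 4 - 1 / p.toReal)) ^ (2 : ℝ) := by
    refine (eLpNorm_le_mul_eLpNorm_of_ae_le_mul hF' 2).trans ?_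
    rw [hsq]
    gcongr
    simpa using eLpNorm_le_eLpNorm_mul_rpow_measure_univ hp (Lp.aestronglyMeasurable f)
  have hfin : μ Set.univ ^ (1 / 4 - 1 / p.toReal) ≠ ∞ := by
    have := rpow_ne_top_of_nonneg (one_div_toReal_sub_nonneg (by norm_num) hp)
      (measure_ne_top μ Set.univ)
    simpa using this
  have := ENNReal.toReal_mono (by finiteness) hle
  rw [Lp.norm_def, Lp.norm_def]
  simpa [ENNReal.toReal_mul, ENNReal.toReal_rpow, hC, Measure.real, mul_comm, mul_assoc,
    mul_left_comm, mul_pow] using this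

theorem memLp_mul_of_ae_abs_le {m : α → ℝ} {M : ℝ≥0} (hqp : q ≤ p)
    (hm : AEStronglyMeasurable m μ) (hM : ∀ᵐ x ∂μ, |m x| ≤ M) (f : Lp ℝ p μ) : MemLp (fun x => m x * f x) q μ :=
  MemLp.of_le (((Lp.memLp f).mono_exponent hqp).const_mul M)
    (hm.mul (Lp.aestronglyMeasurable f)) <| hM.mono fun x hx => by
      simpa [abs_mul] using mul_le_mul_of_nonneg_right hx (abs_nonneg (f x))

variable [Fact (1 ≤ p)] [Fact (1 ≤ q)] {m : α → ℝ} {M : ℝ≥0}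

noncomputable def mulOfAbsLe (hqp : q ≤ p) (hm : AEStronglyMeasurable m μ)
    (hM : ∀ᵐ x ∂μ, |m x| ≤ M) : Lp ℝ p μ →L[ℝ] Lp ℝ q μ :=
  LinearMap.mkContinuous
    { toFun := fun f => (memLp_mul_of_ae_abs_le hqp hm hM f).toLp _
      map_add' := fun f₁ f₂ => by
        rw [← MemLp.toLp_add]
        refine MemLp.toLp_congr _ _ ?_
        filter_upwards [Lp.coeFn_add f₁ f₂] with x hx
        rw [hx, Pi.add_apply, mul_add]; rfl
      map_smul' := fun c f => by
        rw [RingHom.id_apply, ← MemLp.toLp_const_smul]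
        refine MemLp.toLp_congr _ _ ?_
        filter_upwards [Lp.coeFn_smul c f] with x hx
        rw [hx, Pi.smul_apply, smul_eq_mul, mul_left_comm]; rfl }
    (M * μ.real Set.univ ^ (1 / q.toReal - 1 / p.toReal)) fun f =>
      norm_le_mul_norm_of_ae_abs_le_mul (zero_lt_one.trans_le Fact.out).ne' hqp M.2 <| by
        filter_upwards [MemLp.coeFn_toLp (memLp_mul_of_ae_abs_le hqp hm hM f), hM] with x hx hMx
        rw [LinearMap.coe_mk, AddHom.coe_mk, hx, abs_mul]
        exact mul_le_mul_of_nonneg_right hMx (abs_nonneg _)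

theorem coeFn_mulOfAbsLe (hqp : q ≤ p) (hm : AEStronglyMeasurable m μ)
    (hM : ∀ᵐ x ∂μ, |m x| ≤ M) (f : Lp ℝ p μ) :
    mulOfAbsLe hqp hm hM f =ᵐ[μ] fun x => m x * f x :=
  MemLp.coeFn_toLp (memLp_mul_of_ae_abs_le hqp hm hM f)

end MeasureTheory.Lp

theorem hasFDerivAt_of_norm_sub_le_mul_sq {E F : Type*} [NormedAddCommGroup E] [NormedSpace ℝ E]
    [NormedAddCommGroup F] [NormedSpace ℝ F] {f : E → F} {f' : E →L[ℝ] F} {x : E} (C : ℝ)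
    (hf : ∀ v, ‖f (x + v) - f x - f' v‖ ≤ C * ‖v‖ ^ 2) : HasFDerivAt f f' x := by
  rw [hasFDerivAt_iff_isLittleO_nhds_zero]
  refine (Asymptotics.IsBigO.of_bound C (Filter.Eventually.of_forall fun v => ?_)).trans_isLittleO
    (Asymptotics.isLittleO_norm_pow_id one_lt_two)
  simpa using hf v

theorem nemytskii_frechet_differentiable_general
    {d : ℕ} (Ω : Set (Fin d → ℝ))
    (hΩfin : volume Ω < ⊤)
    (μ : Measure (Fin d → ℝ)) (hμ : μ = volume.restrict Ω)
    (β : ℝ) (hβ : 4 < β) [Fact (1 ≤ ENNReal.ofReal β)]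
    (g g' g'' : ℝ → ℝ)
    (K₁ : ℝ) (hgbd : ∀ t : ℝ, |g t| ≤ K₁)
    (hg' : ∀ t : ℝ, HasDerivAt g (g' t) t)
    (hg'' : ∀ t : ℝ, HasDerivAt g' (g'' t) t)
    (K₂ : ℝ) (hg''bd : ∀ t : ℝ, |g'' t| ≤ K₂) :
    (∀ u : Lp ℝ (ENNReal.ofReal β) μ, MemLp (fun x => g (u x)) 2 μ) ∧
    ∃ N : Lp ℝ (ENNReal.ofReal β) μ → Lp ℝ 2 μ,
      (∀ u : Lp ℝ (ENNReal.ofReal β) μ,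
        (N u : (Fin d → ℝ) → ℝ) =ᵐ[μ] fun x => g (u x)) ∧
      ∀ y : Lp ℝ (ENNReal.ofReal β) μ,
        ∃ D : Lp ℝ (ENNReal.ofReal β) μ →L[ℝ] Lp ℝ 2 μ,
          (∀ h : Lp ℝ (ENNReal.ofReal β) μ,
            (D h : (Fin d → ℝ) → ℝ) =ᵐ[μ] fun x => g' (y x) * h x) ∧
          HasFDerivAt N D y := by
  have : IsFiniteMeasure μ := hμ ▸ isFiniteMeasure_restrict.2 hΩfin.ne
  have hβ4 : 4 ≤ ENNReal.ofReal β := by simpa using ENNReal.ofReal_le_ofReal hβ.le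
  have hg_cont : Continuous g := Differentiable.continuous fun t => (hg' t).differentiableAt
  have hg'_cont : Continuous g' := Differentiable.continuous fun t => (hg'' t).differentiableAt
  have hN : ∀ u : Lp ℝ (ENNReal.ofReal β) μ, MemLp (fun x => g (u x)) 2 μ := fun u =>
    .of_bound (hg_cont.comp_aestronglyMeasurable (Lp.aestronglyMeasurable u)) K₁
      (.of_forall fun x => hgbd (u x))
  refine ⟨hN, fun u => (hN u).toLp _, fun u => (hN u).coeFn_toLp, fun y => ?_⟩
  have hg'y : ∀ᵐ x ∂μ, |g' (y x)| ≤ (2 * K₁ + K₂).toNNReal := .of_forall fun x =>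
    (abs_deriv_le_of_abs_le_of_abs_deriv2_le hgbd hg' hg'' hg''bd _).trans
      (Real.le_coe_toNNReal _)
  let D := Lp.mulOfAbsLe (hβ4.trans' (by norm_num) : (2 : ℝ≥0∞) ≤ _)
    (hg'_cont.comp_aestronglyMeasurable (Lp.aestronglyMeasurable y)) hg'y
  have hD : ∀ h, D h =ᵐ[μ] fun x => g' (y x) * h x := Lp.coeFn_mulOfAbsLe _ _ _
  refine ⟨D, hD, hasFDerivAt_of_norm_sub_le_mul_sq
    (K₂ * (μ.real Set.univ ^ (1 / 4 - 1 / (ENNReal.ofReal β).toReal)) ^ 2) fun h => ?_⟩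
  refine Lp.norm_le_mul_norm_sq_of_ae_abs_le_mul_sq hβ4 ((abs_nonneg _).trans (hg''bd 0)) ?_
  filter_upwards [Lp.coeFn_sub ((hN (y + h)).toLp _ - (hN y).toLp _) (D h),
    Lp.coeFn_sub ((hN (y + h)).toLp _) ((hN y).toLp _), (hN (y + h)).coeFn_toLp,
    (hN y).coeFn_toLp, hD h, Lp.coeFn_add y h]
    with x h₁ h₂ h₃ h₄ h₅ h₆
  simp only [h₁, Pi.sub_apply, h₂, h₃, h₄, h₅, h₆, Pi.add_apply]
  simpa using abs_sub_sub_deriv_mul_le_mul_sq hg' hg'' hg''bd (y x + h x) (y x)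

/-- For `β > 4` and `g : ℝ → ℝ` measurable, bounded, twice differentiable with bounded
second derivative, the Nemytskii operator `N : L^β(Ω) → L²(Ω)`, `N(u) = g ∘ u`, is well
defined and Fréchet differentiable at every `y ∈ L^β(Ω)`, with derivative
`h ↦ (x ↦ g'(y(x)) h(x))`. -/
theorem nemytskii_frechet_differentiable
    {d : ℕ} (Ω : Set (Fin d → ℝ))
    (hΩbdd : Bornology.IsBounded Ω) (hΩmeas : MeasurableSet Ω)
    (hΩpos : 0 < volume Ω) (hΩfin : volume Ω < ⊤)
    (μ : Measure (Fin d → ℝ)) (hμ : μ = volume.restrict Ω)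
    (β : ℝ) (hβ : 4 < β) [Fact (1 ≤ ENNReal.ofReal β)]
    (g g' g'' : ℝ → ℝ) (hgmeas : Measurable g)
    (K₁ : ℝ) (hgbd : ∀ t : ℝ, |g t| ≤ K₁)
    (hg' : ∀ t : ℝ, HasDerivAt g (g' t) t)
    (hg'' : ∀ t : ℝ, HasDerivAt g' (g'' t) t)
    (K₂ : ℝ) (hg''bd : ∀ t : ℝ, |g'' t| ≤ K₂) :
    (∀ u : Lp ℝ (ENNReal.ofReal β) μ, MemLp (fun x => g (u x)) 2 μ) ∧
    ∃ N : Lp ℝ (ENNReal.ofReal β) μ → Lp ℝ 2 μ,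
      (∀ u : Lp ℝ (ENNReal.ofReal β) μ,
        (N u : (Fin d → ℝ) → ℝ) =ᵐ[μ] fun x => g (u x)) ∧
      ∀ y : Lp ℝ (ENNReal.ofReal β) μ,
        ∃ D : Lp ℝ (ENNReal.ofReal β) μ →L[ℝ] Lp ℝ 2 μ,
          (∀ h : Lp ℝ (ENNReal.ofReal β) μ,
            (D h : (Fin d → ℝ) → ℝ) =ᵐ[μ] fun x => g' (y x) * h x) ∧
          HasFDerivAt N D y :=
  nemytskii_frechet_differentiable_general Ω hΩfin μ hμ β hβ g g' g'' K₁ hgbd hg' hg'' K₂ hg''bd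
end

section
/- Let Ω ⊂ ℝ^d be a bounded measurable set with finite positive Lebesgue measure and let β > 6. Let g : ℝ → ℝ be measurable and bounded (|g(t)| ≤ K₁ for all t), twice differentiable with |g''(t)| ≤ K₂ for all t, and with g'' globally Lipschitz continuous with constant L̃ > 0. Then the Nemytskii operator N : L^β(Ω) → L²(Ω), N(u) = g∘u, is twice Fréchet differentiable: the derivative map y ↦ N'(y), from L^β(Ω) into the space of continuous linear operators L^β(Ω) → L²(Ω), is Fréchet differentiable at every y ∈ L^β(Ω), and its derivative at y applied to directions h, k ∈ L^β(Ω) is the element of L²(Ω) given by x ↦ g''(y(x)) h(x) k(x) a.e. on Ω. -/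
/-! Both derivatives come from pointwise second-order Taylor bounds,
`|g (a + s) - g a - g' a * s| ≤ K₂ s²` and `|g' (a + s) - g' a - g'' a * s| ≤ L' s²`.
The Fréchet remainders are therefore dominated pointwise by `K₂ h²` and `L' k² |h|`; by Hölder's
inequality these lie in `L^{β/2}` and `L^{β/3}` with norms at most `‖h‖²` and `‖k‖² ‖h‖`, and on a
finite measure space `L^{β/3}` embeds continuously into `L²` because `β ≥ 6`. The derivatives
themselves are multiplication operators by the bounded functions `g' ∘ y` and `g'' ∘ y`. -/

open MeasureTheory ENNReal Asymptotics

theorem abs_sub_le_mul_abs_sub_of_hasDerivAt {f f' : ℝ → ℝ} {K : ℝ}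
    (hf : ∀ t, HasDerivAt f (f' t) t) (hK : ∀ t, |f' t| ≤ K) (a b : ℝ) :
    |f a - f b| ≤ K * |a - b| := by
  simpa only [Real.norm_eq_abs] using
    Convex.norm_image_sub_le_of_norm_hasDerivWithin_le (fun x _ => (hf x).hasDerivWithinAt)
      (fun x _ => hK x) convex_univ (Set.mem_univ b) (Set.mem_univ a)

theorem abs_sub_sub_mul_le_of_lipschitz_deriv {f f' : ℝ → ℝ} {L : ℝ}
    (hf : ∀ t, HasDerivAt f (f' t) t) (hL : ∀ a b, |f' a - f' b| ≤ L * |a - b|) (a s : ℝ) :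
    |f (a + s) - f a - f' a * s| ≤ L * s ^ 2 := by
  have hL0 : 0 ≤ L := by simpa using (abs_nonneg _).trans (hL 1 0)
  have hφ : ∀ t, HasDerivAt (fun t => f (a + t) - f' a * t) (f' (a + t) - f' a) t := fun t =>
    ((hf (a + t)).comp t ((hasDerivAt_id t).const_add a) |>.sub
      ((hasDerivAt_id t).const_mul (f' a))).congr_deriv (by simp)
  have hφ' : ∀ t ∈ Set.uIcc 0 s, ‖f' (a + t) - f' a‖ ≤ L * |s| := fun t ht =>
    calc |f' (a + t) - f' a| ≤ L * |a + t - a| := hL _ _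
      _ ≤ L * |s| :=
        mul_le_mul_of_nonneg_left (by simpa using Set.abs_sub_left_of_mem_uIcc ht) hL0
  have := Convex.norm_image_sub_le_of_norm_hasDerivWithin_le (fun t _ => (hφ t).hasDerivWithinAt)
    hφ' (convex_uIcc 0 s) Set.left_mem_uIcc Set.right_mem_uIcc
  simp only [Real.norm_eq_abs, add_zero, mul_zero, sub_zero] at this
  calc |f (a + s) - f a - f' a * s| = |f (a + s) - f' a * s - f a| := by rw [sub_right_comm]
    _ ≤ L * |s| * |s| := this
    _ = L * s ^ 2 := by rw [mul_assoc, abs_mul_abs_self, sq]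

theorem abs_le_of_abs_sub_sub_mul_le {f f' : ℝ → ℝ} {K L : ℝ} (hK : ∀ t, |f t| ≤ K)
    (hL : ∀ a s, |f (a + s) - f a - f' a * s| ≤ L * s ^ 2) (t : ℝ) : |f' t| ≤ 2 * K + L := by
  have h₁ := abs_le.1 (hL t 1)
  have h₂ := abs_le.1 (hK (t + 1))
  have h₃ := abs_le.1 (hK t)
  rw [abs_le]
  constructor <;> linarith

theorem measurable_of_hasDerivAt {f f' : ℝ → ℝ} (hf : ∀ t, HasDerivAt f (f' t) t) :
    Measurable f' := by
  rw [show f' = deriv f from funext fun t => (hf t).deriv.symm]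
  exact measurable_deriv f

theorem hasFDerivAt_of_norm_le_mul_sq {𝕜 E F : Type*} [NontriviallyNormedField 𝕜]
    [NormedAddCommGroup E] [NormedSpace 𝕜 E] [NormedAddCommGroup F] [NormedSpace 𝕜 F]
    {f : E → F} {f' : E →L[𝕜] F} {x : E} (C : ℝ)
    (h : ∀ v, ‖f (x + v) - f x - f' v‖ ≤ C * ‖v‖ ^ 2) : HasFDerivAt f f' x := by
  rw [hasFDerivAt_iff_isLittleO_nhds_zero]
  exact (IsBigO.of_bound C (.of_forall fun v => by simpa using h v)).trans_isLittleO
    (isLittleO_norm_pow_id one_lt_two)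

theorem ENNReal.holderTriple_ofReal {a b c : ℝ} (ha : 0 < a) (hb : 0 < b)
    (h : a⁻¹ + b⁻¹ = c⁻¹) :
    HolderTriple (ENNReal.ofReal a) (ENNReal.ofReal b) (ENNReal.ofReal c) :=
  ⟨by
    have hc : 0 < c := inv_pos.1 (h ▸ by positivity)
    rw [← ofReal_inv_of_pos ha, ← ofReal_inv_of_pos hb, ← ofReal_inv_of_pos hc,
      ← ofReal_add (by positivity) (by positivity), h]⟩

theorem memLp_top_comp_of_abs_le {α : Type*} [MeasurableSpace α] {μ : Measure α}
    {g : ℝ → ℝ} (hg : Measurable g) {K : ℝ} (hK : ∀ t, |g t| ≤ K) {u : α → ℝ}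
    (hu : AEMeasurable u μ) : MemLp (fun x => g (u x)) ∞ μ :=
  memLp_top_of_bound (hg.comp_aemeasurable hu).aestronglyMeasurable K
    (.of_forall fun x => hK (u x))

theorem measure_univ_rpow_ne_top {α : Type*} [MeasurableSpace α] (μ : Measure α)
    [IsFiniteMeasure μ] {q r : ℝ≥0∞} (hr : r ≠ 0) (hrq : r ≤ q) :
    μ Set.univ ^ (1 / r.toReal - 1 / q.toReal) ≠ ∞ := by
  refine rpow_ne_top_of_nonneg ?_ (measure_ne_top μ _)
  rw [one_div, one_div, ← toReal_inv, ← toReal_inv, sub_nonneg]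
  exact toReal_mono (inv_ne_top.2 hr) (ENNReal.inv_le_inv.2 hrq)

namespace MeasureTheory.Lp

variable {α : Type*} [MeasurableSpace α] {μ : Measure α}

section Holder

variable {p q r : ℝ≥0∞} [HolderTriple p q r]

theorem coeFn_holder_mul (f : Lp ℝ p μ) (g : Lp ℝ q μ) :
    (ContinuousLinearMap.mul ℝ ℝ).holder r f g =ᵐ[μ] fun x => f x * g x :=
  ContinuousLinearMap.coeFn_holder _ f g

theorem norm_holder_mul_le (f : Lp ℝ p μ) (g : Lp ℝ q μ) :
    ‖(ContinuousLinearMap.mul ℝ ℝ).holder r f g‖ ≤ ‖f‖ * ‖g‖ :=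
  calc _ ≤ ‖ContinuousLinearMap.mul ℝ ℝ‖ * ‖f‖ * ‖g‖ :=
        ContinuousLinearMap.norm_holder_apply_apply_le _ f g
    _ ≤ 1 * ‖f‖ * ‖g‖ := by
        have := ContinuousLinearMap.opNorm_mul_le ℝ ℝ
        gcongr <;> exact toReal_nonneg
    _ = ‖f‖ * ‖g‖ := by rw [one_mul]

end Holder

variable [IsFiniteMeasure μ] {q r : ℝ≥0∞}

variable [Fact (1 ≤ q)] [Fact (1 ≤ r)]

noncomputable def inclusion {E : Type*} [NormedAddCommGroup E] [NormedSpace ℝ E] (hrq : r ≤ q) :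
    Lp E q μ →L[ℝ] Lp E r μ :=
  LinearMap.mkContinuous
    { toFun := fun f => ((Lp.memLp f).mono_exponent hrq).toLp f
      map_add' := fun f g => by
        simp only [← MemLp.toLp_add]
        exact MemLp.toLp_congr _ _ (Lp.coeFn_add f g)
      map_smul' := fun c f => by
        simp only [RingHom.id_apply, ← MemLp.toLp_const_smul]
        exact MemLp.toLp_congr _ _ (Lp.coeFn_smul c f) }
    (μ Set.univ ^ (1 / r.toReal - 1 / q.toReal)).toReal
    fun f => by
      rw [LinearMap.coe_mk, AddHom.coe_mk, Lp.norm_toLp, Lp.norm_def,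
        mul_comm _ (eLpNorm _ _ _).toReal, ← toReal_mul]
      refine toReal_mono (mul_ne_top (Lp.eLpNorm_ne_top f) ?_)
        (eLpNorm_le_eLpNorm_mul_rpow_measure_univ hrq (Lp.aestronglyMeasurable f))
      exact measure_univ_rpow_ne_top μ (zero_lt_one.trans_le Fact.out).ne' hrq

theorem coeFn_inclusion {E : Type*} [NormedAddCommGroup E] [NormedSpace ℝ E] (hrq : r ≤ q)
    (f : Lp E q μ) : inclusion hrq f =ᵐ[μ] f :=
  MemLp.coeFn_toLp ((Lp.memLp f).mono_exponent hrq)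

noncomputable def mulBounded (hrq : r ≤ q) {a : α → ℝ} (ha : MemLp a ∞ μ) :
    Lp ℝ q μ →L[ℝ] Lp ℝ r μ :=
  inclusion hrq ∘L (ContinuousLinearMap.mul ℝ ℝ).holderL μ ∞ q q (ha.toLp a)

theorem coeFn_mulBounded (hrq : r ≤ q) {a : α → ℝ} (ha : MemLp a ∞ μ) (f : Lp ℝ q μ) :
    mulBounded hrq ha f =ᵐ[μ] fun x => a x * f x := by
  filter_upwards [coeFn_inclusion hrq ((ContinuousLinearMap.mul ℝ ℝ).holder q (ha.toLp a) f),
    coeFn_holder_mul (r := q) (ha.toLp a) f, ha.coeFn_toLp] with x h₁ h₂ h₃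
  rw [← h₃, ← h₂, ← h₁]
  rfl

variable {p : ℝ≥0∞} [Fact (1 ≤ p)]

noncomputable def mulBounded₂ [HolderTriple p p q] (hrq : r ≤ q) {a : α → ℝ}
    (ha : MemLp a ∞ μ) : Lp ℝ p μ →L[ℝ] Lp ℝ p μ →L[ℝ] Lp ℝ r μ :=
  (ContinuousLinearMap.compL ℝ _ _ _ (mulBounded hrq ha)).comp
    ((ContinuousLinearMap.mul ℝ ℝ).holderL μ p p q)

theorem coeFn_mulBounded₂ [HolderTriple p p q] (hrq : r ≤ q) {a : α → ℝ} (ha : MemLp a ∞ μ)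
    (f g : Lp ℝ p μ) : mulBounded₂ hrq ha f g =ᵐ[μ] fun x => a x * f x * g x := by
  filter_upwards [coeFn_mulBounded hrq ha ((ContinuousLinearMap.mul ℝ ℝ).holder q f g),
    coeFn_holder_mul (r := q) f g] with x h₁ h₂
  rw [mul_assoc, ← h₂, ← h₁]
  rfl

end MeasureTheory.Lp

section Nemytskii

open Lp

variable {α : Type*} [MeasurableSpace α] {μ : Measure α} [IsFiniteMeasure μ] {p q r : ℝ≥0∞}
  [Fact (1 ≤ p)] [HolderTriple p p q]

theorem hasFDerivAt_nemytskii [Fact (1 ≤ q)] (hq : 2 ≤ q) {g g' : ℝ → ℝ} {K : ℝ}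
    (hg : ∀ a s, |g (a + s) - g a - g' a * s| ≤ K * s ^ 2)
    {N : Lp ℝ p μ → Lp ℝ 2 μ} {DN : Lp ℝ p μ →L[ℝ] Lp ℝ 2 μ} {y : Lp ℝ p μ}
    (hN : ∀ u, N u =ᵐ[μ] fun x => g (u x)) (hDN : ∀ h, DN h =ᵐ[μ] fun x => g' (y x) * h x) :
    HasFDerivAt N DN y := by
  have hK : 0 ≤ K := by simpa using (abs_nonneg _).trans (hg 0 1)
  set ι : Lp ℝ q μ →L[ℝ] Lp ℝ 2 μ := inclusion hq
  refine hasFDerivAt_of_norm_le_mul_sq (K * ‖ι‖) fun h => ?_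
  set hh := (ContinuousLinearMap.mul ℝ ℝ).holder q h h
  have hpt : ∀ᵐ x ∂μ, ‖(N (y + h) - N y - DN h) x‖ ≤ K * ‖ι hh x‖ := by
    filter_upwards [Lp.coeFn_sub (N (y + h) - N y) (DN h), Lp.coeFn_sub (N (y + h)) (N y),
      hN (y + h), hN y, hDN h, Lp.coeFn_add y h, coeFn_inclusion hq hh,
      coeFn_holder_mul (r := q) h h] with x e₁ e₂ e₃ e₄ e₅ e₆ e₇ e₈
    rw [e₁, Pi.sub_apply, e₂, Pi.sub_apply, e₃, e₄, e₅, e₆, Pi.add_apply, e₇, e₈,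
      Real.norm_eq_abs, Real.norm_eq_abs, abs_mul_self, ← sq]
    exact hg _ _
  calc ‖N (y + h) - N y - DN h‖ ≤ K * ‖ι hh‖ := Lp.norm_le_mul_norm_of_ae_le_mul hpt
    _ ≤ K * (‖ι‖ * (‖h‖ * ‖h‖)) := by gcongr; exact ι.le_opNorm_of_le (norm_holder_mul_le h h)
    _ = K * ‖ι‖ * ‖h‖ ^ 2 := by ring

theorem hasFDerivAt_nemytskii_deriv [Fact (1 ≤ r)] [HolderTriple q p r] (hr : 2 ≤ r)
    {g' g'' : ℝ → ℝ} {L : ℝ} (hg' : ∀ a s, |g' (a + s) - g' a - g'' a * s| ≤ L * s ^ 2)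
    {DN : Lp ℝ p μ → Lp ℝ p μ →L[ℝ] Lp ℝ 2 μ} {D₂ : Lp ℝ p μ →L[ℝ] Lp ℝ p μ →L[ℝ] Lp ℝ 2 μ}
    {y : Lp ℝ p μ} (hDN : ∀ u h, DN u h =ᵐ[μ] fun x => g' (u x) * h x)
    (hD₂ : ∀ h k, D₂ h k =ᵐ[μ] fun x => g'' (y x) * h x * k x) :
    HasFDerivAt DN D₂ y := by
  have hL : 0 ≤ L := by simpa using (abs_nonneg _).trans (hg' 0 1)
  set ι : Lp ℝ r μ →L[ℝ] Lp ℝ 2 μ := inclusion hr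
  refine hasFDerivAt_of_norm_le_mul_sq (L * ‖ι‖) fun k =>
    ContinuousLinearMap.opNorm_le_bound _ (by positivity) fun h => ?_
  set kk := (ContinuousLinearMap.mul ℝ ℝ).holder q k k
  set kkh := (ContinuousLinearMap.mul ℝ ℝ).holder r kk h
  have hpt : ∀ᵐ x ∂μ, ‖(DN (y + k) h - DN y h - D₂ k h) x‖ ≤ L * ‖ι kkh x‖ := by
    filter_upwards [Lp.coeFn_sub (DN (y + k) h - DN y h) (D₂ k h),
      Lp.coeFn_sub (DN (y + k) h) (DN y h), hDN (y + k) h, hDN y h, hD₂ k h, Lp.coeFn_add y k,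
      coeFn_inclusion hr kkh, coeFn_holder_mul (r := r) kk h, coeFn_holder_mul (r := q) k k]
      with x e₁ e₂ e₃ e₄ e₅ e₆ e₇ e₈ e₉
    rw [e₁, Pi.sub_apply, e₂, Pi.sub_apply, e₃, e₄, e₅, e₆, Pi.add_apply, e₇, e₈, e₉,
      Real.norm_eq_abs, Real.norm_eq_abs,
      show g' (y x + k x) * h x - g' (y x) * h x - g'' (y x) * k x * h x =
        (g' (y x + k x) - g' (y x) - g'' (y x) * k x) * h x by ring,
      abs_mul, abs_mul, abs_mul_self, ← sq, ← mul_assoc]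
    exact mul_le_mul_of_nonneg_right (hg' _ _) (abs_nonneg _)
  calc ‖(DN (y + k) - DN y - D₂ k) h‖ = ‖DN (y + k) h - DN y h - D₂ k h‖ := rfl
    _ ≤ L * ‖ι kkh‖ := Lp.norm_le_mul_norm_of_ae_le_mul hpt
    _ ≤ L * (‖ι‖ * (‖k‖ * ‖k‖ * ‖h‖)) := by
        gcongr
        exact ι.le_opNorm_of_le ((norm_holder_mul_le _ h).trans
          (mul_le_mul_of_nonneg_right (norm_holder_mul_le k k) (norm_nonneg h)))
    _ = L * ‖ι‖ * ‖k‖ ^ 2 * ‖h‖ := by ring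

end Nemytskii

theorem nemytskii_second_frechet_differentiable_general
    {d : ℕ} (Ω : Set (Fin d → ℝ))
    (hΩfin : volume Ω < ⊤)
    (μ : Measure (Fin d → ℝ)) (hμ : μ = volume.restrict Ω)
    (β : ℝ) (hβ : 6 < β) [Fact (1 ≤ ENNReal.ofReal β)]
    (g g' g'' : ℝ → ℝ) (hgmeas : Measurable g)
    (K₁ : ℝ) (hgbd : ∀ t : ℝ, |g t| ≤ K₁)
    (hg' : ∀ t : ℝ, HasDerivAt g (g' t) t)
    (hg'' : ∀ t : ℝ, HasDerivAt g' (g'' t) t)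
    (K₂ : ℝ) (hg''bd : ∀ t : ℝ, |g'' t| ≤ K₂)
    (L' : ℝ)
    (hg''lip : ∀ a b : ℝ, |g'' a - g'' b| ≤ L' * |a - b|) :
    ∃ (N : Lp ℝ (ENNReal.ofReal β) μ → Lp ℝ 2 μ)
      (DN : Lp ℝ (ENNReal.ofReal β) μ → (Lp ℝ (ENNReal.ofReal β) μ →L[ℝ] Lp ℝ 2 μ)),
      (∀ u : Lp ℝ (ENNReal.ofReal β) μ,
        (N u : (Fin d → ℝ) → ℝ) =ᵐ[μ] fun x => g (u x)) ∧
      (∀ y : Lp ℝ (ENNReal.ofReal β) μ, HasFDerivAt N (DN y) y) ∧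
      (∀ y h : Lp ℝ (ENNReal.ofReal β) μ,
        (DN y h : (Fin d → ℝ) → ℝ) =ᵐ[μ] fun x => g' (y x) * h x) ∧
      (∀ y : Lp ℝ (ENNReal.ofReal β) μ,
        ∃ D₂ : Lp ℝ (ENNReal.ofReal β) μ →L[ℝ]
            (Lp ℝ (ENNReal.ofReal β) μ →L[ℝ] Lp ℝ 2 μ),
          HasFDerivAt DN D₂ y ∧
          ∀ h k : Lp ℝ (ENNReal.ofReal β) μ,
            (D₂ h k : (Fin d → ℝ) → ℝ) =ᵐ[μ] fun x => g'' (y x) * h x * k x) := by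
  have : IsFiniteMeasure μ := ⟨by rwa [hμ, Measure.restrict_apply_univ]⟩
  have : Fact (1 ≤ ENNReal.ofReal (β / 2)) := ⟨ENNReal.one_le_ofReal.2 (by linarith)⟩
  have : Fact (1 ≤ ENNReal.ofReal (β / 3)) := ⟨ENNReal.one_le_ofReal.2 (by linarith)⟩
  have := ENNReal.holderTriple_ofReal (c := β / 2) (by linarith) (by linarith)
    (by rw [inv_div]; ring)
  have := ENNReal.holderTriple_ofReal (c := β / 3) (a := β / 2) (by linarith) (by linarith)
    (by rw [inv_div, inv_div]; ring)
  have taylor_g := abs_sub_sub_mul_le_of_lipschitz_deriv hg'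
    (abs_sub_le_mul_abs_sub_of_hasDerivAt hg'' hg''bd)
  have taylor_g' := abs_sub_sub_mul_le_of_lipschitz_deriv hg'' hg''lip
  have hmem {G : ℝ → ℝ} (hG : Measurable G) {K : ℝ} (hK : ∀ t, |G t| ≤ K)
      (u : Lp ℝ (ENNReal.ofReal β) μ) : MemLp (fun x => G (u x)) ∞ μ :=
    memLp_top_comp_of_abs_le hG hK (Lp.aestronglyMeasurable u).aemeasurable
  let N (u : Lp ℝ (ENNReal.ofReal β) μ) : Lp ℝ 2 μ :=
    ((hmem hgmeas hgbd u).mono_exponent le_top).toLp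
  let DN y := Lp.mulBounded (ENNReal.ofNat_le_ofReal.2 (by linarith : (2 : ℝ) ≤ β))
    (hmem (measurable_of_hasDerivAt hg') (abs_le_of_abs_sub_sub_mul_le hgbd taylor_g) y)
  have hN (u) : N u =ᵐ[μ] fun x => g (u x) := MemLp.coeFn_toLp _
  have hDN (y h) : DN y h =ᵐ[μ] fun x => g' (y x) * h x := Lp.coeFn_mulBounded _ _ h
  refine ⟨N, DN, hN, fun y => ?_, hDN, fun y => ?_⟩
  · exact hasFDerivAt_nemytskii (ENNReal.ofNat_le_ofReal.2 (by linarith : (2 : ℝ) ≤ β / 2))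
      taylor_g hN (hDN y)
  · have hD₂ := Lp.coeFn_mulBounded₂ (p := ENNReal.ofReal β)
      (ENNReal.ofNat_le_ofReal.2 (by linarith : (2 : ℝ) ≤ β / 2))
      (hmem (measurable_of_hasDerivAt hg'') hg''bd y)
    exact ⟨_, hasFDerivAt_nemytskii_deriv (q := ENNReal.ofReal (β / 2))
      (ENNReal.ofNat_le_ofReal.2 (by linarith : (2 : ℝ) ≤ β / 3)) taylor_g' hDN hD₂, hD₂⟩

/-- For `d`-dimensional `Ω`, `β > 6` and `g : ℝ → ℝ` measurable, bounded, twice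
differentiable with bounded and globally Lipschitz second derivative, the Nemytskii
operator `N : L^β(Ω) → L²(Ω)`, `N(u) = g ∘ u`, is twice Fréchet differentiable: the
derivative map `y ↦ N'(y)` (with `N'(y)h = (x ↦ g'(y(x))h(x))`) is Fréchet
differentiable at every `y`, with second derivative acting on directions `h, k` by
`x ↦ g''(y(x)) h(x) k(x)`. -/
theorem nemytskii_second_frechet_differentiable
    {d : ℕ} (Ω : Set (Fin d → ℝ))
    (hΩbdd : Bornology.IsBounded Ω) (hΩmeas : MeasurableSet Ω)
    (hΩpos : 0 < volume Ω) (hΩfin : volume Ω < ⊤)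
    (μ : Measure (Fin d → ℝ)) (hμ : μ = volume.restrict Ω)
    (β : ℝ) (hβ : 6 < β) [Fact (1 ≤ ENNReal.ofReal β)]
    (g g' g'' : ℝ → ℝ) (hgmeas : Measurable g)
    (K₁ : ℝ) (hgbd : ∀ t : ℝ, |g t| ≤ K₁)
    (hg' : ∀ t : ℝ, HasDerivAt g (g' t) t)
    (hg'' : ∀ t : ℝ, HasDerivAt g' (g'' t) t)
    (K₂ : ℝ) (hg''bd : ∀ t : ℝ, |g'' t| ≤ K₂)
    (L' : ℝ) (hL' : 0 < L')
    (hg''lip : ∀ a b : ℝ, |g'' a - g'' b| ≤ L' * |a - b|) :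
    ∃ (N : Lp ℝ (ENNReal.ofReal β) μ → Lp ℝ 2 μ)
      (DN : Lp ℝ (ENNReal.ofReal β) μ → (Lp ℝ (ENNReal.ofReal β) μ →L[ℝ] Lp ℝ 2 μ)),
      (∀ u : Lp ℝ (ENNReal.ofReal β) μ,
        (N u : (Fin d → ℝ) → ℝ) =ᵐ[μ] fun x => g (u x)) ∧
      (∀ y : Lp ℝ (ENNReal.ofReal β) μ, HasFDerivAt N (DN y) y) ∧
      (∀ y h : Lp ℝ (ENNReal.ofReal β) μ,
        (DN y h : (Fin d → ℝ) → ℝ) =ᵐ[μ] fun x => g' (y x) * h x) ∧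
      (∀ y : Lp ℝ (ENNReal.ofReal β) μ,
        ∃ D₂ : Lp ℝ (ENNReal.ofReal β) μ →L[ℝ]
            (Lp ℝ (ENNReal.ofReal β) μ →L[ℝ] Lp ℝ 2 μ),
          HasFDerivAt DN D₂ y ∧
          ∀ h k : Lp ℝ (ENNReal.ofReal β) μ,
            (D₂ h k : (Fin d → ℝ) → ℝ) =ᵐ[μ] fun x => g'' (y x) * h x * k x) :=
  nemytskii_second_frechet_differentiable_general Ω hΩfin μ hμ β hβ g g' g'' hgmeas K₁ hgbd hg' hg''
    K₂ hg''bd L' hg''lip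
end

section
/- Let Ω ⊂ ℝ^d be a bounded measurable set with finite positive Lebesgue measure |Ω| and let 6 ≤ β < ∞. Let g : ℝ → ℝ be twice differentiable with second derivative g'' globally Lipschitz continuous with constant L̃ > 0. Then for all y, h ∈ L^β(Ω), the function x ↦ g(y(x)+h(x)) − g(y(x)) − g'(y(x)) h(x) − (1/2) g''(y(x)) h(x)² belongs to L²(Ω) and its L²(Ω) norm is at most (L̃/6) |Ω|^{(β−6)/(2β)} ‖h‖³_{L^β(Ω)}. -/
/-!
Integrating the Lipschitz bound `|g'' (a + s) - g'' a| ≤ L |s|` twice gives the pointwise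
Taylor estimate `|g (a + t) - g a - g' a t - g'' a t² / 2| ≤ L / 6 |t|³`. Hence the remainder is
bounded in `L²` by `L / 6 ‖|h|³‖_{L²} = L / 6 ‖h‖_{L⁶}³`, and on a set of finite measure
Hölder's inequality gives `‖h‖_{L⁶} ≤ |Ω|^{1/6 - 1/β} ‖h‖_{L^β}` for `β ≥ 6`.
-/

open MeasureTheory ENNReal

section PowerBound

variable {E : Type*} [NormedAddCommGroup E] [NormedSpace ℝ E] {φ φ' : ℝ → E} {C : ℝ} {n : ℕ}

theorem norm_le_of_norm_deriv_le_pow_of_nonneg (hφ : ∀ s, HasDerivAt φ (φ' s) s)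
    (h0 : φ 0 = 0) (hbound : ∀ s, ‖φ' s‖ ≤ C * |s| ^ n) {t : ℝ} (ht : 0 ≤ t) :
    ‖φ t‖ ≤ C / (n + 1) * t ^ (n + 1) := by
  have hB : ∀ s, HasDerivAt (fun s ↦ C / (n + 1) * s ^ (n + 1)) (C * s ^ n) s := fun s ↦ by
    refine ((hasDerivAt_pow (n + 1) s).const_mul (C / (n + 1))).congr_deriv ?_
    rw [Nat.add_sub_cancel]
    push_cast
    field_simp
  refine image_norm_le_of_norm_deriv_right_le_deriv_boundary
    (fun s _ ↦ (hφ s).continuousAt.continuousWithinAt) (fun s _ ↦ (hφ s).hasDerivWithinAt)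
    (by simp [h0]) hB (fun s hs ↦ ?_) ⟨ht, le_rfl⟩
  simpa [abs_of_nonneg hs.1] using hbound s

theorem norm_le_of_norm_deriv_le_pow (hφ : ∀ s, HasDerivAt φ (φ' s) s)
    (h0 : φ 0 = 0) (hbound : ∀ s, ‖φ' s‖ ≤ C * |s| ^ n) (t : ℝ) :
    ‖φ t‖ ≤ C / (n + 1) * |t| ^ (n + 1) := by
  rcases le_total 0 t with ht | ht
  · simpa [abs_of_nonneg ht] using norm_le_of_norm_deriv_le_pow_of_nonneg hφ h0 hbound ht
  · have hφneg : ∀ s, HasDerivAt (fun s ↦ φ (-s)) (-φ' (-s)) s := fun s ↦ by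
      simpa [Function.comp_def] using (hφ (-s)).scomp s (hasDerivAt_neg s)
    have := norm_le_of_norm_deriv_le_pow_of_nonneg hφneg (by simpa using h0)
      (fun s ↦ by simpa using hbound (-s)) (neg_nonneg.mpr ht)
    simpa [abs_of_nonpos ht] using this

end PowerBound

theorem abs_taylor_remainder_two_le {g g' g'' : ℝ → ℝ} {L : ℝ}
    (hg' : ∀ t, HasDerivAt g (g' t) t) (hg'' : ∀ t, HasDerivAt g' (g'' t) t)
    (hlip : ∀ a b, |g'' a - g'' b| ≤ L * |a - b|) (a t : ℝ) :
    |g (a + t) - g a - g' a * t - 1 / 2 * g'' a * t ^ 2| ≤ L / 6 * |t| ^ 3 := by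
  have hd₁ (s : ℝ) :
      HasDerivAt (fun s ↦ g' (a + s) - g' a - g'' a * s) (g'' (a + s) - g'' a) s := by
    simpa using (((hg'' (a + s)).comp_const_add a s).sub_const (g' a)).fun_sub
      ((hasDerivAt_id' s).const_mul (g'' a))
  have hd₂ (s : ℝ) : HasDerivAt (fun s ↦ g (a + s) - g a - g' a * s - 1 / 2 * g'' a * s ^ 2)
      (g' (a + s) - g' a - g'' a * s) s := by
    refine (((((hg' (a + s)).comp_const_add a s).sub_const (g a)).fun_sub
      ((hasDerivAt_id' s).const_mul (g' a))).fun_sub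
      ((hasDerivAt_pow 2 s).const_mul (1 / 2 * g'' a))).congr_deriv ?_
    norm_num
    ring
  have hfirst (s : ℝ) : |g' (a + s) - g' a - g'' a * s| ≤ L / 2 * |s| ^ 2 := by
    have := norm_le_of_norm_deriv_le_pow (n := 1) hd₁ (by simp)
      (fun s ↦ by simpa using hlip (a + s) a) s
    norm_num at this ⊢
    exact this
  have := norm_le_of_norm_deriv_le_pow (n := 2) hd₂ (by simp) hfirst t
  norm_num [div_div] at this ⊢
  exact this

theorem eLpNorm_norm_pow_le_mul_rpow_measure_univ {α F : Type*} [MeasurableSpace α]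
    {μ : Measure α} [NormedAddCommGroup F] {f : α → F} {p q : ℝ≥0∞} {n : ℕ} (hn : n ≠ 0)
    (hpq : p * n ≤ q) (hf : AEStronglyMeasurable f μ) :
    eLpNorm (fun x ↦ ‖f x‖ ^ n) p μ ≤
      eLpNorm f q μ ^ n * μ Set.univ ^ ((1 / (p * n).toReal - 1 / q.toReal) * n) := by
  have hpow := eLpNorm_norm_rpow (p := p) (μ := μ) f (Nat.cast_pos.mpr hn.bot_lt)
  simp only [Real.rpow_natCast, ENNReal.ofReal_natCast] at hpow
  rw [hpow, ← ENNReal.rpow_natCast (eLpNorm f q μ), ENNReal.rpow_mul,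
    ← ENNReal.mul_rpow_of_nonneg _ _ (Nat.cast_nonneg n)]
  gcongr
  exact eLpNorm_le_eLpNorm_mul_rpow_measure_univ hpq hf

theorem eLpNorm_taylor_remainder_two_le {α : Type*} [MeasurableSpace α] {μ : Measure α}
    {g g' g'' : ℝ → ℝ} {L : ℝ}
    (hg' : ∀ t, HasDerivAt g (g' t) t) (hg'' : ∀ t, HasDerivAt g' (g'' t) t)
    (hlip : ∀ a b, |g'' a - g'' b| ≤ L * |a - b|) (y h : α → ℝ) (p : ℝ≥0∞) :
    eLpNorm (fun x ↦ g (y x + h x) - g (y x) - g' (y x) * h x - 1 / 2 * g'' (y x) * h x ^ 2) p μ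
      ≤ ENNReal.ofReal (L / 6) * eLpNorm (fun x ↦ ‖h x‖ ^ 3) p μ :=
  eLpNorm_le_mul_eLpNorm_of_ae_le_mul (ae_of_all _ fun x ↦ by
    simpa using abs_taylor_remainder_two_le hg' hg'' hlip (y x) (h x)) p

theorem aestronglyMeasurable_taylor_remainder_two {α : Type*} [MeasurableSpace α]
    {μ : Measure α} {g g' g'' : ℝ → ℝ} {L : ℝ}
    (hg' : ∀ t, HasDerivAt g (g' t) t) (hg'' : ∀ t, HasDerivAt g' (g'' t) t)
    (hlip : ∀ a b, |g'' a - g'' b| ≤ L * |a - b|) {y h : α → ℝ}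
    (hy : AEStronglyMeasurable y μ) (hh : AEStronglyMeasurable h μ) :
    AEStronglyMeasurable
      (fun x ↦ g (y x + h x) - g (y x) - g' (y x) * h x - 1 / 2 * g'' (y x) * h x ^ 2) μ := by
  have : Continuous g := Differentiable.continuous fun t ↦ (hg' t).differentiableAt
  have : Continuous g' := Differentiable.continuous fun t ↦ (hg'' t).differentiableAt
  have : Continuous g'' :=
    (LipschitzWith.of_dist_le' (K := L) fun a b ↦ by simpa [Real.dist_eq] using hlip a b).continuous
  fun_prop

theorem nemytskii_second_order_taylor_estimate_general
    {d : ℕ} (Ω : Set (Fin d → ℝ))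
    (hΩfin : volume Ω < ⊤)
    (μ : Measure (Fin d → ℝ)) (hμ : μ = volume.restrict Ω)
    (β : ℝ) (hβ : 6 ≤ β)
    (g g' g'' : ℝ → ℝ)
    (hg' : ∀ t : ℝ, HasDerivAt g (g' t) t)
    (hg'' : ∀ t : ℝ, HasDerivAt g' (g'' t) t)
    (L' : ℝ)
    (hg''lip : ∀ a b : ℝ, |g'' a - g'' b| ≤ L' * |a - b|) :
    ∀ y h : (Fin d → ℝ) → ℝ,
      MemLp y (ENNReal.ofReal β) μ → MemLp h (ENNReal.ofReal β) μ →
      MemLp (fun x =>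
        g (y x + h x) - g (y x) - g' (y x) * h x - (1 / 2) * g'' (y x) * h x ^ 2) 2 μ ∧
      eLpNorm (fun x =>
          g (y x + h x) - g (y x) - g' (y x) * h x - (1 / 2) * g'' (y x) * h x ^ 2) 2 μ ≤
        ENNReal.ofReal (L' / 6) * volume Ω ^ ((β - 6) / (2 * β)) *
          eLpNorm h (ENNReal.ofReal β) μ ^ (3 : ℕ) := by
  intro y h hy hh
  have h6β : (2 : ℝ≥0∞) * (3 : ℕ) ≤ ENNReal.ofReal β := by
    rw [← ENNReal.ofReal_ofNat]
    norm_num [hβ]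
  have hcube : eLpNorm (fun x ↦ ‖h x‖ ^ 3) 2 μ ≤
      eLpNorm h (ENNReal.ofReal β) μ ^ 3 * volume Ω ^ ((β - 6) / (2 * β)) := by
    convert eLpNorm_norm_pow_le_mul_rpow_measure_univ three_ne_zero h6β hh.aestronglyMeasurable
      using 3
    · rw [hμ, Measure.restrict_apply_univ]
    · rw [ENNReal.toReal_ofReal (by linarith)]
      norm_num
      field_simp
      ring
  have hest : _ ≤ ENNReal.ofReal (L' / 6) * volume Ω ^ ((β - 6) / (2 * β)) *
      eLpNorm h (ENNReal.ofReal β) μ ^ 3 :=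
    ((eLpNorm_taylor_remainder_two_le hg' hg'' hg''lip y h 2).trans
      (mul_le_mul_right hcube _)).trans_eq (by ring)
  refine ⟨⟨aestronglyMeasurable_taylor_remainder_two hg' hg'' hg''lip hy.1 hh.1,
    hest.trans_lt ?_⟩, hest⟩
  finiteness

/-- Second-order Taylor estimate in `L²(Ω)` for the Nemytskii operator: for `β ≥ 6` and
`g` twice differentiable with `g''` globally Lipschitz with constant `L̃ > 0`, and
`y, h ∈ L^β(Ω)`,
`‖g∘(y+h) − g∘y − (g'∘y)·h − ½(g''∘y)·h²‖_{L²} ≤ (L̃/6) |Ω|^{(β−6)/(2β)} ‖h‖³_{L^β}`. -/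
theorem nemytskii_second_order_taylor_estimate
    {d : ℕ} (Ω : Set (Fin d → ℝ))
    (hΩbdd : Bornology.IsBounded Ω) (hΩmeas : MeasurableSet Ω)
    (hΩpos : 0 < volume Ω) (hΩfin : volume Ω < ⊤)
    (μ : Measure (Fin d → ℝ)) (hμ : μ = volume.restrict Ω)
    (β : ℝ) (hβ : 6 ≤ β)
    (g g' g'' : ℝ → ℝ)
    (hg' : ∀ t : ℝ, HasDerivAt g (g' t) t)
    (hg'' : ∀ t : ℝ, HasDerivAt g' (g'' t) t)
    (L' : ℝ) (hL' : 0 < L')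
    (hg''lip : ∀ a b : ℝ, |g'' a - g'' b| ≤ L' * |a - b|) :
    ∀ y h : (Fin d → ℝ) → ℝ,
      MemLp y (ENNReal.ofReal β) μ → MemLp h (ENNReal.ofReal β) μ →
      MemLp (fun x =>
        g (y x + h x) - g (y x) - g' (y x) * h x - (1 / 2) * g'' (y x) * h x ^ 2) 2 μ ∧
      eLpNorm (fun x =>
          g (y x + h x) - g (y x) - g' (y x) * h x - (1 / 2) * g'' (y x) * h x ^ 2) 2 μ ≤
        ENNReal.ofReal (L' / 6) * volume Ω ^ ((β - 6) / (2 * β)) *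
          eLpNorm h (ENNReal.ofReal β) μ ^ (3 : ℕ) :=
  nemytskii_second_order_taylor_estimate_general Ω hΩfin μ hμ β hβ g g' g'' hg' hg'' L' hg''lip
end
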